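/- Let c be a Schur stable monic real polynomial of degree n, and for m > n let P^{c,d}_m be the m×m weighted symmetric Toeplitz matrix built from the trigonometric polynomial p^{c,d}. If P^{c,d}_m is positive definite, then p^{c,d}(θ) > 0 for all θ, and consequently d is Schur stable. Hence the convex LMI set {d ∈ ℝⁿ : P^{c,d}_m ≻ 0} is contained in the set of coefficient vectors of Schur stable monic polynomials of degree n. -/

import Mathlib

/-!
Testing the positive definite matrix `P^{c,d}_m` against the vectors `(cos jθ)_j` and
`(sin jθ)_j` gives `m · p^{c,d}(θ)`: there are `m - l` index pairs with `j - k = l` and as many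
with `k - j = l`, and the weight `m / (m - l)` cancels this count. Hence `p^{c,d} > 0`, i.e.
`Re (conj c(u) · d(u)) > 0` on the unit circle.

For the second claim reflect through the circle: `c*(w) = wⁿ c(1/w)` has no zero in the closed
unit disc because `c` is Schur stable, so `h = d*/c*` is holomorphic there and `Re h > 0` on the
circle. The minimum principle for `Re h` (the maximum modulus principle for `exp (-h)`) makes
`Re h > 0` on the whole closed disc, so `d*` has no zero there, i.e. `d` has none with `|z| ≥ 1`.
-/

open Polynomial Complex Matrix Finset

/-- Fourier (cosine) coefficients of `p^{c,d}(θ) = c(e^{-iθ})d(e^{iθ}) + c(e^{iθ})d(e^{-iθ})`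
written in the form `p₀ + Σ_{l≥1} 2 p_l cos(lθ)`:
`p₀ = 2 Σ_j c_j d_j` and `p_l = Σ_{|j-k|=l} c_j d_k` for `l ≥ 1`. -/
noncomputable def pcdCoeff (n : ℕ) (c d : Polynomial ℝ) (l : ℕ) : ℝ :=
  if l = 0 then 2 * ∑ j ∈ Finset.range (n + 1), c.coeff j * d.coeff j
  else ∑ j ∈ Finset.range (n + 1), ∑ k ∈ Finset.range (n + 1),
    if ((j : ℤ) - (k : ℤ)).natAbs = l then c.coeff j * d.coeff k else 0

/-- The `m × m` weighted symmetric banded Toeplitz matrix with `(j,k)` entry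
`(m/(m-|j-k|)) p_{|j-k|}` for `|j-k| ≤ n`, else `0`. -/
noncomputable def Pmat (n m : ℕ) (p : ℕ → ℝ) : Matrix (Fin m) (Fin m) ℝ :=
  fun j k =>
    if ((j : ℤ) - (k : ℤ)).natAbs ≤ n then
      ((m : ℝ) / ((m : ℝ) - (((j : ℤ) - (k : ℤ)).natAbs : ℝ))) * p ((( j : ℤ) - (k : ℤ)).natAbs)
    else 0

open scoped ComplexConjugate

theorem sum_range_sum_range_natAbs_sub {M : Type*} [AddCommMonoid M] (m : ℕ) (F : ℕ → M) :
    ∑ j ∈ range m, ∑ k ∈ range m, F ((j : ℤ) - k).natAbs =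
      ∑ l ∈ range m, (if l = 0 then m else 2 * (m - l)) • F l := by
  induction m with
  | zero => simp
  | succ m ih =>
    have hrow : ∑ j ∈ range m, F ((j : ℤ) - m).natAbs = ∑ l ∈ range m, F (l + 1) := by
      rw [← sum_range_reflect]
      exact sum_congr rfl fun j hj => by have := mem_range.1 hj; congr 1; omega
    have hcol : ∑ k ∈ range m, F ((m : ℤ) - k).natAbs = ∑ l ∈ range m, F (l + 1) := by
      rw [← hrow]
      exact sum_congr rfl fun k _ => by congr 1; omega
    have hcoeff : ∀ l ∈ range (m + 1), (if l = 0 then m + 1 else 2 * (m + 1 - l)) • F l =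
        (if l = 0 then m else 2 * (m - l)) • F l + (if l = 0 then 1 else 2) • F l := by
      intro l hl
      have := mem_range.1 hl
      rw [← add_smul]
      congr 1
      split_ifs <;> omega
    have hlast : (if m = 0 then m else 2 * (m - m)) • F m = 0 := by split_ifs <;> simp_all
    conv_rhs => rw [sum_congr rfl hcoeff, sum_add_distrib, sum_range_succ _ m, hlast,
      sum_range_succ' _ m, ← ih]
    simp only [sum_range_succ, sum_add_distrib, hrow, hcol, Nat.add_one_ne_zero, if_false,
      if_true, two_nsmul, sub_self, Int.natAbs_zero, one_smul, add_zero]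
    abel

theorem Real.cos_natAbs_sub_mul (a b : ℕ) (θ : ℝ) :
    Real.cos ((((a : ℤ) - b).natAbs : ℝ) * θ) = Real.cos (((a : ℝ) - b) * θ) := by
  rw [Nat.cast_natAbs, Int.cast_abs]
  push_cast
  rcases abs_choice ((a : ℝ) - b) with h | h
  · rw [h]
  · rw [h, neg_mul, Real.cos_neg]

noncomputable def cosPoly (n : ℕ) (p : ℕ → ℝ) (θ : ℝ) : ℝ :=
  ∑ l ∈ range (n + 1), (if l = 0 then 1 else 2) * p l * Real.cos (l * θ)

theorem sum_Pmat_mul_cos {n m : ℕ} (hnm : n < m) (p : ℕ → ℝ) (θ : ℝ) :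
    ∑ j : Fin m, ∑ k : Fin m, Pmat n m p j k * Real.cos (((j : ℝ) - k) * θ) =
      m * cosPoly n p θ := by
  set F : ℕ → ℝ := fun l => if l ≤ n then m / (m - l) * p l * Real.cos (l * θ) else 0
  have hterm : ∀ j k : Fin m,
      Pmat n m p j k * Real.cos (((j : ℝ) - k) * θ) = F ((j : ℤ) - k).natAbs := by
    intro j k
    simp only [Pmat, F, ← Real.cos_natAbs_sub_mul]
    split_ifs <;> ring
  have hweight : ∀ l ∈ range (n + 1), (if l = 0 then m else 2 * (m - l)) • F l =
      m * ((if l = 0 then 1 else 2) * p l * Real.cos (l * θ)) := by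
    intro l hl
    have hln : l ≤ n := Nat.lt_succ_iff.1 (mem_range.1 hl)
    have hml : (m : ℝ) - l ≠ 0 := sub_ne_zero.2 (by norm_cast; omega)
    simp only [F, if_pos hln, nsmul_eq_mul]
    split_ifs with h0
    · subst h0; field_simp; ring
    · rw [Nat.cast_mul, Nat.cast_sub (by omega)]; field_simp; ring
  have hrange : ∀ j : ℕ, ∑ k : Fin m, F ((j : ℤ) - (k : ℕ)).natAbs =
      ∑ k ∈ range m, F ((j : ℤ) - k).natAbs :=
    fun j => Fin.sum_univ_eq_sum_range (fun k => F ((j : ℤ) - k).natAbs) m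
  simp_rw [hterm, hrange]
  rw [Fin.sum_univ_eq_sum_range (fun j => ∑ k ∈ range m, F ((j : ℤ) - k).natAbs) m,
    sum_range_sum_range_natAbs_sub, cosPoly, mul_sum, ← sum_congr rfl hweight]
  refine (sum_subset (range_subset_range.2 hnm) fun l hlm hln => ?_).symm
  simp [F, if_neg (show ¬ l ≤ n by simpa [Nat.lt_succ_iff] using hln)]

theorem Matrix.dotProduct_mulVec_cos_add_sin {ι : Type*} [Fintype ι] (A : Matrix ι ι ℝ)
    (t : ι → ℝ) :
    (Real.cos ∘ t) ⬝ᵥ A *ᵥ (Real.cos ∘ t) + (Real.sin ∘ t) ⬝ᵥ A *ᵥ (Real.sin ∘ t) =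
      ∑ j, ∑ k, A j k * Real.cos (t j - t k) := by
  simp only [dotProduct, mulVec, Function.comp, mul_sum, ← sum_add_distrib, Real.cos_sub]
  exact sum_congr rfl fun j _ => sum_congr rfl fun k _ => by ring

theorem cosPoly_pos_of_posDef {n m : ℕ} (hnm : n < m) {p : ℕ → ℝ} (hP : (Pmat n m p).PosDef)
    (θ : ℝ) : 0 < cosPoly n p θ := by
  set t : Fin m → ℝ := fun j => j * θ
  have hcos : Real.cos ∘ t ≠ 0 := fun h => by
    simpa [t] using congrFun h ⟨0, by omega⟩
  have hform := hP.dotProduct_mulVec_pos hcos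
  have hform' := hP.posSemidef.dotProduct_mulVec_nonneg (Real.sin ∘ t)
  have hsum := dotProduct_mulVec_cos_add_sin (Pmat n m p) t
  simp only [star_trivial, t, ← sub_mul, sum_Pmat_mul_cos hnm] at hform hform' hsum
  have hm : (0 : ℝ) ≤ m := m.cast_nonneg
  exact pos_of_mul_pos_right (hsum ▸ add_pos_of_pos_of_nonneg hform hform') hm

-- The paper's `p^{c,d}(θ)`; the sum is real and `.re` only records this.
noncomputable def pcd (c d : ℝ[X]) (θ : ℝ) : ℝ :=
  (aeval (cexp (-(θ : ℂ) * I)) c * aeval (cexp ((θ : ℂ) * I)) d +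
    aeval (cexp ((θ : ℂ) * I)) c * aeval (cexp (-(θ : ℂ) * I)) d).re

theorem Complex.conj_exp_ofReal_mul_I (θ : ℝ) : conj (cexp ((θ : ℂ) * I)) = cexp (-(θ : ℂ) * I) := by
  rw [← Complex.exp_conj, map_mul, conj_ofReal, conj_I, mul_neg, neg_mul]

theorem pcd_eq_two_mul_re (c d : ℝ[X]) (θ : ℝ) :
    pcd c d θ = 2 * (conj (aeval (cexp ((θ : ℂ) * I)) c) * aeval (cexp ((θ : ℂ) * I)) d).re := by
  rw [pcd, ← conj_exp_ofReal_mul_I, aeval_conj, aeval_conj]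
  simp only [add_re, mul_re, conj_re, conj_im]
  ring

theorem Complex.re_conj_exp_pow_mul_exp_pow (θ : ℝ) (a b : ℕ) :
    (conj (cexp ((θ : ℂ) * I)) ^ a * cexp ((θ : ℂ) * I) ^ b).re = Real.cos (((a : ℝ) - b) * θ) := by
  rw [← Complex.exp_conj, ← exp_nat_mul, ← exp_nat_mul, ← exp_add,
    show (a : ℂ) * conj ((θ : ℂ) * I) + b * ((θ : ℂ) * I) = (((b - a) * θ : ℝ) : ℂ) * I by
      simp only [map_mul, conj_ofReal, conj_I]; push_cast; ring,
    exp_ofReal_mul_I_re, ← Real.cos_neg]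
  ring_nf

theorem re_conj_aeval_mul_aeval {n : ℕ} {c d : ℝ[X]} (hc : c.natDegree ≤ n) (hd : d.natDegree ≤ n)
    (θ : ℝ) :
    (conj (aeval (cexp ((θ : ℂ) * I)) c) * aeval (cexp ((θ : ℂ) * I)) d).re =
      ∑ a ∈ range (n + 1), ∑ b ∈ range (n + 1),
        c.coeff a * d.coeff b * Real.cos (((a : ℝ) - b) * θ) := by
  rw [aeval_eq_sum_range' (Nat.lt_succ_of_le hc), aeval_eq_sum_range' (Nat.lt_succ_of_le hd),
    map_sum, sum_mul_sum, re_sum]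
  refine sum_congr rfl fun a _ => ?_
  rw [re_sum]
  refine sum_congr rfl fun b _ => ?_
  simp only [real_smul, map_mul, conj_ofReal, map_pow]
  rw [← re_conj_exp_pow_mul_exp_pow, ← re_ofReal_mul]
  congr 1
  push_cast
  ring

theorem cosPoly_pcdCoeff (n : ℕ) (c d : ℝ[X]) (θ : ℝ) :
    cosPoly n (pcdCoeff n c d) θ =
      2 * ∑ a ∈ range (n + 1), ∑ b ∈ range (n + 1),
        c.coeff a * d.coeff b * Real.cos (((a : ℝ) - b) * θ) := by
  have hcoeff : ∀ l, (if l = 0 then 1 else 2) * pcdCoeff n c d l =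
      2 * ∑ a ∈ range (n + 1), ∑ b ∈ range (n + 1),
        if ((a : ℤ) - b).natAbs = l then c.coeff a * d.coeff b else 0 := by
    intro l
    rw [pcdCoeff]
    split_ifs with hl
    · subst hl
      simp only [Int.natAbs_eq_zero, sub_eq_zero, Nat.cast_inj, sum_ite_eq, mem_range, one_mul]
      exact congrArg _ (sum_congr rfl fun a ha => (if_pos (mem_range.1 ha)).symm)
    · ring
  simp_rw [cosPoly, hcoeff, mul_sum, sum_mul]
  rw [sum_comm]
  refine sum_congr rfl fun a ha => ?_
  rw [sum_comm]
  refine sum_congr rfl fun b hb => ?_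
  have hab : ((a : ℤ) - b).natAbs ∈ range (n + 1) := by
    have := mem_range.1 ha; have := mem_range.1 hb; rw [mem_range]; omega
  simp only [mul_ite, ite_mul, mul_zero, zero_mul, sum_ite_eq, if_pos hab,
    Real.cos_natAbs_sub_mul]
  ring

theorem pcd_pos_of_posDef {n m : ℕ} (hnm : n < m) {c d : ℝ[X]} (hc : c.natDegree ≤ n)
    (hd : d.natDegree ≤ n) (hP : (Pmat n m (pcdCoeff n c d)).PosDef) (θ : ℝ) :
    0 < pcd c d θ := by
  rw [pcd_eq_two_mul_re, re_conj_aeval_mul_aeval hc hd, ← cosPoly_pcdCoeff]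
  exact cosPoly_pos_of_posDef hnm hP θ

theorem Complex.le_re_of_forall_mem_frontier_le_re {U : Set ℂ} (hU : Bornology.IsBounded U)
    {h : ℂ → ℂ} (hh : DiffContOnCl ℂ h U) {ε : ℝ} (hε : ∀ w ∈ frontier U, ε ≤ (h w).re)
    {w : ℂ} (hw : w ∈ closure U) : ε ≤ (h w).re := by
  have hexp : DiffContOnCl ℂ (fun w => cexp (-h w)) U :=
    differentiable_exp.comp_diffContOnCl hh.neg
  have hbound := norm_le_of_forall_mem_frontier_norm_le (C := Real.exp (-ε)) hU hexp
    (fun w hw => by simpa [norm_exp] using hε w hw) hw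
  simpa [norm_exp] using hbound

theorem Complex.re_pos_of_forall_mem_sphere_re_pos {x : ℂ} {r : ℝ} (hr : 0 < r) {h : ℂ → ℂ}
    (hh : DiffContOnCl ℂ h (Metric.ball x r)) (hpos : ∀ w ∈ Metric.sphere x r, 0 < (h w).re)
    {w : ℂ} (hw : w ∈ Metric.closedBall x r) : 0 < (h w).re := by
  have hcont : ContinuousOn (fun w => (h w).re) (Metric.sphere x r) :=
    continuous_re.comp_continuousOn (hh.continuousOn.mono
      (closure_ball x hr.ne' ▸ Metric.sphere_subset_closedBall))
  obtain ⟨w₀, hw₀, hmin⟩ := (isCompact_sphere x r).exists_isMinOn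
    (NormedSpace.sphere_nonempty.2 hr.le) hcont
  refine (hpos w₀ hw₀).trans_le (le_re_of_forall_mem_frontier_le_re Metric.isBounded_ball hh ?_ ?_)
  · rw [frontier_ball x hr.ne']
    exact fun w hw => hmin hw
  · rwa [closure_ball x hr.ne']

theorem Polynomial.eval_reflect_eq_pow_mul_eval_inv {K : Type*} [Field K] {f : K[X]} {N : ℕ}
    (hf : f.natDegree ≤ N) {w : K} (hw : w ≠ 0) :
    (reflect N f).eval w = w ^ N * f.eval w⁻¹ := by
  have := invertibleOfNonzero (inv_ne_zero hw)
  have h := eval₂_reflect_mul_pow (RingHom.id K) w⁻¹ N f hf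
  rw [invOf_eq_inv, inv_inv] at h
  simp only [eval]
  rw [← h, inv_pow, mul_left_comm, mul_inv_cancel₀ (pow_ne_zero N hw), mul_one]

theorem Polynomial.eval_zero_reflect {R : Type*} [Semiring R] (f : R[X]) (N : ℕ) :
    (reflect N f).eval 0 = f.coeff N := by
  rw [← coeff_zero_eq_eval_zero, coeff_reflect, revAt_le (Nat.zero_le N), Nat.sub_zero]

theorem Polynomial.norm_lt_one_of_eval_eq_zero_of_re_pos {c d : ℂ[X]} (hc0 : c ≠ 0)
    (hdc : d.natDegree ≤ c.natDegree) (hc : ∀ z, c.eval z = 0 → ‖z‖ < 1)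
    (hpos : ∀ u : ℂ, ‖u‖ = 1 → 0 < (conj (c.eval u) * d.eval u).re)
    {z : ℂ} (hz : d.eval z = 0) : ‖z‖ < 1 := by
  set N := c.natDegree
  have hf : ∀ w ∈ Metric.closedBall (0 : ℂ) 1, (reflect N c).eval w ≠ 0 := by
    intro w hw
    rcases eq_or_ne w 0 with rfl | hw0
    · rw [eval_zero_reflect, coeff_natDegree]
      exact leadingCoeff_ne_zero.2 hc0
    · rw [eval_reflect_eq_pow_mul_eval_inv le_rfl hw0]
      refine mul_ne_zero (pow_ne_zero _ hw0) fun hcw => ?_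
      have h1 := hc _ hcw
      rw [norm_inv, inv_lt_one₀ (norm_pos_iff.2 hw0)] at h1
      exact (mem_closedBall_zero_iff.1 hw).not_gt h1
  -- On the circle `d*(w) / c*(w) = d(u) / c(u) = conj c(u) d(u) / |c(u)|²` with `u = w⁻¹`.
  have hsphere : ∀ w ∈ Metric.sphere (0 : ℂ) 1,
      0 < ((reflect N d).eval w / (reflect N c).eval w).re := by
    intro w hw
    have hw1 : ‖w‖ = 1 := mem_sphere_zero_iff_norm.1 hw
    have hw0 : w ≠ 0 := norm_ne_zero_iff.1 (hw1 ▸ one_ne_zero)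
    have hu : ‖w⁻¹‖ = 1 := by rw [norm_inv, hw1, inv_one]
    have hcu : c.eval w⁻¹ ≠ 0 := fun h => (hc _ h).ne hu
    rw [eval_reflect_eq_pow_mul_eval_inv le_rfl hw0, eval_reflect_eq_pow_mul_eval_inv hdc hw0,
      mul_div_mul_left _ _ (pow_ne_zero _ hw0),
      ← mul_div_mul_left _ _ ((_root_.map_ne_zero conj).2 hcu), ← normSq_eq_conj_mul_self,
      div_ofReal_re]
    exact div_pos (hpos _ hu) (normSq_pos.2 hcu)
  have hdiff : DiffContOnCl ℂ (fun w => (reflect N d).eval w / (reflect N c).eval w)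
      (Metric.ball 0 1) := by
    refine DifferentiableOn.diffContOnCl fun w hw => ?_
    rw [closure_ball _ one_ne_zero] at hw
    exact ((Polynomial.differentiable _ w).div (Polynomial.differentiable _ w)
      (hf w hw)).differentiableWithinAt
  by_contra! hz1
  have hz0 : z ≠ 0 := norm_ne_zero_iff.1 (by linarith)
  have hzinv : z⁻¹ ∈ Metric.closedBall (0 : ℂ) 1 := by
    rw [mem_closedBall_zero_iff, norm_inv]
    exact inv_le_one_of_one_le₀ hz1
  have hre := re_pos_of_forall_mem_sphere_re_pos one_pos hdiff hsphere hzinv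
  rw [eval_reflect_eq_pow_mul_eval_inv hdc (inv_ne_zero hz0), inv_inv, hz] at hre
  simp at hre

theorem stmt9_general (n m : ℕ) (hmn : n < m) (c d : Polynomial ℝ)
    (hcm : c.Monic) (hcd : c.natDegree = n)
    (hdd : d.natDegree = n)
    (hcstab : ∀ z : ℂ, Polynomial.aeval z c = 0 → ‖z‖ < 1)
    (hPD : (Pmat n m (pcdCoeff n c d)).PosDef) :
    (∀ θ : ℝ,
      0 < ((Polynomial.aeval (Complex.exp (-(θ : ℂ) * Complex.I)) c) *
             (Polynomial.aeval (Complex.exp ((θ : ℂ) * Complex.I)) d) +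
           (Polynomial.aeval (Complex.exp ((θ : ℂ) * Complex.I)) c) *
             (Polynomial.aeval (Complex.exp (-(θ : ℂ) * Complex.I)) d)).re) ∧
    (∀ z : ℂ, Polynomial.aeval z d = 0 → ‖z‖ < 1) := by
  have hpos : ∀ θ : ℝ, 0 < pcd c d θ := pcd_pos_of_posDef hmn hcd.le hdd.le hPD
  refine ⟨hpos, fun z hz => ?_⟩
  refine norm_lt_one_of_eval_eq_zero_of_re_pos (c := c.map (algebraMap ℝ ℂ))
    (d := d.map (algebraMap ℝ ℂ)) (hcm.map _).ne_zero (by simp [hcd, hdd])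
    (by simpa only [eval_map_algebraMap] using hcstab) (fun u hu => ?_)
    (by rwa [eval_map_algebraMap])
  have hu : cexp (u.arg * I) = u := by simpa [hu] using norm_mul_exp_arg_mul_I u
  have h2 := hpos u.arg
  rw [pcd_eq_two_mul_re, hu] at h2
  simpa only [eval_map_algebraMap] using pos_of_mul_pos_right h2 zero_le_two

/-- If the weighted Toeplitz matrix `P^{c,d}_m` is positive definite, then `p^{c,d} > 0`
everywhere and `d` is Schur stable. -/
theorem stmt9 (n m : ℕ) (hmn : n < m) (c d : Polynomial ℝ)
    (hcm : c.Monic) (hcd : c.natDegree = n)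
    (hdm : d.Monic) (hdd : d.natDegree = n)
    (hcstab : ∀ z : ℂ, Polynomial.aeval z c = 0 → ‖z‖ < 1)
    (hPD : (Pmat n m (pcdCoeff n c d)).PosDef) :
    (∀ θ : ℝ,
      0 < ((Polynomial.aeval (Complex.exp (-(θ : ℂ) * Complex.I)) c) *
             (Polynomial.aeval (Complex.exp ((θ : ℂ) * Complex.I)) d) +
           (Polynomial.aeval (Complex.exp ((θ : ℂ) * Complex.I)) c) *
             (Polynomial.aeval (Complex.exp (-(θ : ℂ) * Complex.I)) d)).re) ∧
    (∀ z : ℂ, Polynomial.aeval z d = 0 → ‖z‖ < 1) :=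
  stmt9_general n m hmn c d hcm hcd hdd hcstab hPD
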